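/- Corollary 2 (min-max optimization, pointwise form): let φ : ℝ^{d¹} × ℝ^{d²} → ℝ be differentiable, convex in its first argument for each fixed second argument and concave in its second argument for each fixed first argument, and let Φ(x¹, x²) = φ(x¹, x²) + g¹(x¹) − g²(x²) with g¹, g² γ-strongly convex (γ ≥ 0). Run the CODER iteration on ℝ^d (d = d¹ + d²) with F(x) = (∇_{x¹}φ(x¹,x²), −∇_{x²}φ(x¹,x²)) and g(x) = g¹(x¹) + g²(x²), the separable function whose blocks are g¹ on the x¹-coordinates and g² on the x²-coordinates, assuming F satisfies the blockwise Lipschitz assumption with masked-matrix constant L. Let (x̃_k¹, x̃_k²) = (1/A_k)∑_{j=1}^k a_j (x_j¹, x_j²). Then for every y¹ ∈ ℝ^{d¹}, y² ∈ ℝ^{d²} and every k ≥ 1: Φ(x̃_k¹, y²) − Φ(y¹, x̃_k²) ≤ (‖y¹ − x₀¹‖² + ‖y² − x₀²‖²)/(2A_k). -/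

import Mathlib

open scoped RealInnerProductSpace

/-- Operator norm of a square real matrix, viewed as a linear map on Euclidean space. -/
noncomputable def matOpNorm {d : ℕ} (Q : Matrix (Fin d) (Fin d) ℝ) : ℝ :=
  ‖Matrix.toEuclideanCLM (𝕜 := ℝ) Q‖

/-- The quadratic form `vᵀ Q v` on Euclidean space. -/
noncomputable def quadForm {d : ℕ} (Q : Matrix (Fin d) (Fin d) ℝ)
    (v : EuclideanSpace ℝ (Fin d)) : ℝ :=
  ⟪v, Matrix.toEuclideanCLM (𝕜 := ℝ) Q v⟫

section CoderHelpers

variable {E : Type*} [NormedAddCommGroup E] [InnerProductSpace ℝ E]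

lemma coder_combo_norm_sq (x y : E) (t : ℝ) :
    ‖(1-t) • x + t • y‖^2 = (1-t)*‖x‖^2 + t*‖y‖^2 - t*(1-t)*‖x-y‖^2 := by
  simp only [← real_inner_self_eq_norm_sq, inner_add_add_self, inner_sub_sub_self,
    real_inner_smul_left, real_inner_smul_right]
  ring

lemma coder_quad_growth {c : E → ℝ} (hc : ConvexOn ℝ Set.univ c) {μ : ℝ} (hμ : 0 ≤ μ)
    (f : E → ℝ) (hf : ∀ z, f z = c z + μ/2 * ‖z‖^2) {xs : E}
    (hmin : ∀ z, f xs ≤ f z) (z : E) : f xs + μ/2 * ‖z - xs‖^2 ≤ f z := by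
  have key : ∀ t : ℝ, t ∈ Set.Ioo (0:ℝ) 1 → μ*(1-t)/2 * ‖z - xs‖^2 ≤ f z - f xs := by
    intro t ht
    obtain ⟨ht0, ht1⟩ := ht
    have hcc := hc.2 (Set.mem_univ xs) (Set.mem_univ z) (by linarith : (0:ℝ) ≤ 1 - t)
      (le_of_lt ht0) (by ring)
    simp only [smul_eq_mul] at hcc
    have hnorm := coder_combo_norm_sq xs z t
    have hzx : ‖xs - z‖^2 = ‖z - xs‖^2 := by rw [← norm_neg, neg_sub]
    rw [hzx] at hnorm
    have hmin' := hmin ((1-t) • xs + t • z)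
    rw [hf, hf] at hmin'
    have hts : 0 ≤ t * (f z - f xs - μ*(1-t)/2 * ‖z - xs‖^2) := by
      rw [hf, hf]; nlinarith [hmin', hcc, hnorm]
    nlinarith [hts, ht0]
  have hlim : Filter.Tendsto (fun t : ℝ => μ*(1-t)/2 * ‖z - xs‖^2) (nhdsWithin 0 (Set.Ioi 0))
      (nhds (μ/2 * ‖z - xs‖^2)) := by
    have hcont : Continuous (fun t : ℝ => μ*(1-t)/2 * ‖z - xs‖^2) := by continuity
    have h := hcont.tendsto 0
    simp only [sub_zero, mul_one] at h
    exact h.mono_left nhdsWithin_le_nhds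
  have hle : μ/2 * ‖z - xs‖^2 ≤ f z - f xs := by
    refine le_of_tendsto hlim ?_
    filter_upwards [Ioo_mem_nhdsGT_of_mem (Set.mem_Ico.2 ⟨le_refl (0:ℝ), one_pos⟩)] with t ht
    exact key t ht
  linarith

lemma coder_convexOn_inner (v : E) : ConvexOn ℝ Set.univ (fun z : E => ⟪v, z⟫) := by
  refine ⟨convex_univ, ?_⟩
  intro x _ y _ s t _ _ _
  simp [inner_add_right, real_inner_smul_right]

lemma coder_convexOn_normSq {r : ℝ} (hr : 0 ≤ r) :
    ConvexOn ℝ Set.univ (fun z : E => r * ‖z‖^2) := by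
  refine ⟨convex_univ, ?_⟩
  intro x _ y _ s t hs ht hst
  have hs1 : s = 1 - t := by linarith
  subst hs1
  have h := coder_combo_norm_sq x y t
  simp only [smul_eq_mul]
  nlinarith [mul_nonneg (mul_nonneg ht (by linarith : (0:ℝ) ≤ 1 - t)) (sq_nonneg ‖x-y‖)]

variable [CompleteSpace E]

lemma coder_convex_grad_ineq {f : E → ℝ} (hc : ConvexOn ℝ Set.univ f) (hd : Differentiable ℝ f)
    (x y : E) : f x + ⟪gradient f x, y - x⟫ ≤ f y := by
  have hg : HasGradientAt f (gradient f x) x := (hd x).hasGradientAt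
  have hfd : HasFDerivAt f (InnerProductSpace.toDual ℝ E (gradient f x)) x :=
    hasGradientAt_iff_hasFDerivAt.mp hg
  have hline : HasDerivAt (fun t : ℝ => x + t • (y - x)) (y - x) 0 := by
    have h1 : HasDerivAt (fun t : ℝ => t • (y - x)) ((1:ℝ) • (y - x)) 0 :=
      (hasDerivAt_id 0).smul_const (y - x)
    simpa using h1.const_add x
  have hcomp : HasDerivAt (fun t : ℝ => f (x + t • (y - x)))
      (InnerProductSpace.toDual ℝ E (gradient f x) (y - x)) 0 := by
    have hfd' : HasFDerivAt f (InnerProductSpace.toDual ℝ E (gradient f x))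
        (x + (0:ℝ) • (y-x)) := by simpa using hfd
    have := hfd'.comp_hasDerivAt 0 hline
    exact this
  set g : ℝ → ℝ := fun t => f (x + t • (y - x)) with hgdef
  have hslope : Filter.Tendsto (slope g 0) (nhdsWithin 0 (Set.Ioi 0))
      (nhds (⟪gradient f x, y - x⟫)) := by
    have h := hasDerivAt_iff_tendsto_slope.mp hcomp
    rw [InnerProductSpace.toDual_apply_apply] at h
    exact h.mono_left (nhdsWithin_mono _ (fun t ht => Set.mem_compl_singleton_iff.mpr
      (ne_of_gt ht)))
  have hbound : ⟪gradient f x, y - x⟫ ≤ f y - f x := by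
    refine le_of_tendsto hslope ?_
    filter_upwards [Ioo_mem_nhdsGT_of_mem (Set.mem_Ico.2 ⟨le_refl (0:ℝ), one_pos⟩)] with t ht
    obtain ⟨ht0, ht1⟩ := ht
    have hpt : x + t • (y - x) = (1-t) • x + t • y := by module
    have hcc := hc.2 (Set.mem_univ x) (Set.mem_univ y) (by linarith : (0:ℝ) ≤ 1-t)
      (le_of_lt ht0) (by ring)
    simp only [smul_eq_mul] at hcc
    have hgt : g t ≤ (1-t) * f x + t * f y := by rw [hgdef]; simpa [hpt] using hcc
    have hg0 : g 0 = f x := by simp [hgdef]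
    rw [slope_def_field, hg0, sub_zero, div_le_iff₀ ht0]
    nlinarith
  linarith

lemma coder_gradient_neg {f : E → ℝ} {x : E} (hd : DifferentiableAt ℝ f x) :
    gradient (fun w => -f w) x = -gradient f x := by
  have h1 : HasFDerivAt f (InnerProductSpace.toDual ℝ E (gradient f x)) x :=
    hasGradientAt_iff_hasFDerivAt.mp hd.hasGradientAt
  have h2 : HasFDerivAt (fun w => -f w) (InnerProductSpace.toDual ℝ E (-(gradient f x))) x := by
    rw [map_neg]; exact h1.neg
  have h3 : HasGradientAt (fun w => -f w) (-(gradient f x)) x :=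
    hasGradientAt_iff_hasFDerivAt.mpr h2
  exact (h3.differentiableAt.hasGradientAt).unique h3

end CoderHelpers


lemma toEuclideanCLM_apply' {d : ℕ} (M : Matrix (Fin d) (Fin d) ℝ)
    (v : EuclideanSpace ℝ (Fin d)) (j : Fin d) :
    Matrix.toEuclideanCLM (𝕜 := ℝ) M v j = ∑ l, M j l * v l := rfl

lemma quadForm_eq' {d : ℕ} (M : Matrix (Fin d) (Fin d) ℝ) (v : EuclideanSpace ℝ (Fin d)) :
    quadForm M v = ∑ j, ∑ l, v j * (M j l * v l) := by
  simp [quadForm, PiLp.inner_apply, RCLike.inner_apply, toEuclideanCLM_apply',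
    Finset.mul_sum]
  simp only [Finset.sum_mul]
  exact Finset.sum_congr rfl fun j _ => Finset.sum_congr rfl fun l _ => by ring

lemma quadForm_le' {d : ℕ} (M : Matrix (Fin d) (Fin d) ℝ) (v : EuclideanSpace ℝ (Fin d)) :
    quadForm M v ≤ matOpNorm M * ‖v‖^2 := by
  have h1 : quadForm M v ≤ ‖v‖ * ‖Matrix.toEuclideanCLM (𝕜 := ℝ) M v‖ := real_inner_le_norm _ _
  have h2 : ‖Matrix.toEuclideanCLM (𝕜 := ℝ) M v‖ ≤ matOpNorm M * ‖v‖ :=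
    (Matrix.toEuclideanCLM (𝕜 := ℝ) M).le_opNorm v
  nlinarith [norm_nonneg v, norm_nonneg (Matrix.toEuclideanCLM (𝕜 := ℝ) M v)]

lemma quadForm_sum' {d m : ℕ} (M : Fin m → Matrix (Fin d) (Fin d) ℝ)
    (v : EuclideanSpace ℝ (Fin d)) :
    ∑ i, quadForm (M i) v = quadForm (∑ i, M i) v := by
  simp only [quadForm_eq', Matrix.sum_apply, Finset.sum_mul, Finset.mul_sum]
  rw [Finset.sum_comm]
  exact Finset.sum_congr rfl fun j _ => Finset.sum_comm

set_option maxHeartbeats 4000000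

/-- **Statement 15** (Corollary 2: min-max optimization, pointwise form).
Let `φ : ℝ^{d¹} × ℝ^{d²} → ℝ` be differentiable, convex in its first argument and
concave in its second, and `Φ(x¹,x²) = φ(x¹,x²) + g¹(x¹) − g²(x²)` with `g¹, g²`
`γ`-strongly convex (`γ ≥ 0`). Run CODER on `ℝ^d`, `d = d¹ + d²`, with
`F(x) = (∇_{x¹}φ(x¹,x²), −∇_{x²}φ(x¹,x²))` and the separable regularizer
`g(x) = g¹(x¹) + g²(x²)`, the blocks refining the `(x¹,x²)` split, and `F`
satisfying the blockwise Lipschitz assumption with masked-matrix constant `L`.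
With `(x̃_k¹, x̃_k²) = (1/A_k)∑_{j=1}^k a_j(x_j¹, x_j²)`, for all `y¹, y², k ≥ 1`:
`Φ(x̃_k¹, y²) − Φ(y¹, x̃_k²) ≤ (‖y¹ − x₀¹‖² + ‖y² − x₀²‖²)/(2A_k)`. -/
theorem stmt15 {d1 d2 m : ℕ}
    (blk : Fin (d1 + d2) → Fin m) (hblk : Monotone blk)
    -- the blocks refine the (x¹, x²) split of the coordinates
    (hrefine : ∀ j j' : Fin (d1 + d2), blk j = blk j' → ((j : ℕ) < d1 ↔ (j' : ℕ) < d1))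
    -- projections onto the two groups of coordinates
    (π₁ : EuclideanSpace ℝ (Fin (d1 + d2)) → EuclideanSpace ℝ (Fin d1))
    (hπ₁ : ∀ z (i : Fin d1), π₁ z i = z (Fin.castAdd d2 i))
    (π₂ : EuclideanSpace ℝ (Fin (d1 + d2)) → EuclideanSpace ℝ (Fin d2))
    (hπ₂ : ∀ z (i : Fin d2), π₂ z i = z (Fin.natAdd d1 i))
    -- the convex-concave coupling function φ
    (φ : EuclideanSpace ℝ (Fin d1) → EuclideanSpace ℝ (Fin d2) → ℝ)
    (hφd1 : ∀ w2, Differentiable ℝ fun w1 => φ w1 w2)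
    (hφd2 : ∀ w1, Differentiable ℝ fun w2 => φ w1 w2)
    (hφconv : ∀ w2, ConvexOn ℝ Set.univ fun w1 => φ w1 w2)
    (hφconc : ∀ w1, ConcaveOn ℝ Set.univ fun w2 => φ w1 w2)
    -- the operator F of the min-max reduction
    (F : EuclideanSpace ℝ (Fin (d1 + d2)) → EuclideanSpace ℝ (Fin (d1 + d2)))
    (hF1 : ∀ z (i : Fin d1),
      F z (Fin.castAdd d2 i) = gradient (fun w1 => φ w1 (π₂ z)) (π₁ z) i)
    (hF2 : ∀ z (i : Fin d2),
      F z (Fin.natAdd d1 i) = -gradient (fun w2 => φ (π₁ z) w2) (π₂ z) i)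
    (γ L : ℝ) (hγ : 0 ≤ γ) (hL : 0 < L)
    -- blockwise Lipschitz assumption for F
    (Q : Fin m → Matrix (Fin (d1 + d2)) (Fin (d1 + d2)) ℝ)
    (hpsd : ∀ i, (Q i).PosSemidef)
    (hlip : ∀ (i : Fin m) (z w : EuclideanSpace ℝ (Fin (d1 + d2))),
      ∑ j ∈ Finset.univ.filter (fun j => blk j = i), (F z j - F w j) ^ 2
        ≤ quadForm (Q i) (z - w))
    (Qhat : Fin m → Matrix (Fin (d1 + d2)) (Fin (d1 + d2)) ℝ)
    (hQhat : ∀ (i : Fin m) (j k : Fin (d1 + d2)),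
      Qhat i j k = if i ≤ blk j ∧ i ≤ blk k then Q i j k else 0)
    (hL2 : L ^ 2 = matOpNorm (∑ i, Qhat i))
    -- the γ-strongly convex regularizers g¹, g² and the separable g of the reduction
    (g1 : EuclideanSpace ℝ (Fin d1) → ℝ) (g2 : EuclideanSpace ℝ (Fin d2) → ℝ)
    (hg1 : ConvexOn ℝ Set.univ fun w => g1 w - γ / 2 * ‖w‖ ^ 2)
    (hg2 : ConvexOn ℝ Set.univ fun w => g2 w - γ / 2 * ‖w‖ ^ 2)
    (G : EuclideanSpace ℝ (Fin (d1 + d2)) → ℝ)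
    (hG : ∀ z, G z = g1 (π₁ z) + g2 (π₂ z))
    -- the objective Φ of the min-max problem
    (Phi : EuclideanSpace ℝ (Fin d1) → EuclideanSpace ℝ (Fin d2) → ℝ)
    (hPhi : ∀ w1 w2, Phi w1 w2 = φ w1 w2 + g1 w1 - g2 w2)
    -- step sizes
    (a A : ℕ → ℝ) (ha0 : a 0 = 0) (hA0 : A 0 = 0)
    (ha : ∀ k : ℕ, a (k + 1) = (1 + γ * A k) / (2 * L))
    (hA : ∀ k : ℕ, A (k + 1) = A k + a (k + 1))
    -- iterates, cyclic coordinate gradients, and extrapolated gradients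
    (x p q : ℕ → EuclideanSpace ℝ (Fin (d1 + d2)))
    (hp0 : p 0 = F (x 0))
    (hp : ∀ (k : ℕ) (j : Fin (d1 + d2)),
      p (k + 1) j = F (WithLp.toLp 2 (fun j' => if blk j' < blk j then x (k + 1) j' else x k j')) j)
    (hq : ∀ (k : ℕ) (j : Fin (d1 + d2)),
      q (k + 1) j = p (k + 1) j + a k / a (k + 1) * (F (x k) j - p k j))
    -- estimation sequence and its minimization property
    (ψ : ℕ → EuclideanSpace ℝ (Fin (d1 + d2)) → EuclideanSpace ℝ (Fin (d1 + d2)) → ℝ)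
    (hψ : ∀ (k : ℕ) (z u : EuclideanSpace ℝ (Fin (d1 + d2))),
      ψ k z u = ∑ j ∈ Finset.Icc 1 k, a j * (⟪q j, z - u⟫ + G z - G u)
        + 1 / 2 * ‖z - x 0‖ ^ 2)
    (hxmin : ∀ k : ℕ, 1 ≤ k →
      ∀ u z : EuclideanSpace ℝ (Fin (d1 + d2)), ψ k (x k) u ≤ ψ k z u)
    -- averaged iterates
    (xt : ℕ → EuclideanSpace ℝ (Fin (d1 + d2)))
    (hxt : ∀ k : ℕ, xt k = (A k)⁻¹ • ∑ j ∈ Finset.Icc 1 k, a j • x j) :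
    ∀ (y1 : EuclideanSpace ℝ (Fin d1)) (y2 : EuclideanSpace ℝ (Fin d2)) (k : ℕ), 1 ≤ k →
      Phi (π₁ (xt k)) y2 - Phi y1 (π₂ (xt k)) ≤
        (‖y1 - π₁ (x 0)‖ ^ 2 + ‖y2 - π₂ (x 0)‖ ^ 2) / (2 * A k) := by
  intro y1 y2 k hk
  -- ===== coordinate/projection infrastructure =====
  have hsub₁ : ∀ z w : EuclideanSpace ℝ (Fin (d1+d2)), π₁ (z - w) = π₁ z - π₁ w := by
    intro z w; ext i; simp [hπ₁]
  have hsub₂ : ∀ z w : EuclideanSpace ℝ (Fin (d1+d2)), π₂ (z - w) = π₂ z - π₂ w := by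
    intro z w; ext i; simp [hπ₂]
  have hinner_split : ∀ z w : EuclideanSpace ℝ (Fin (d1+d2)),
      ⟪z, w⟫ = ⟪π₁ z, π₁ w⟫ + ⟪π₂ z, π₂ w⟫ := by
    intro z w
    have hsum : (∑ i : Fin (d1+d2), z i * w i)
        = (∑ i : Fin d1, z (Fin.castAdd d2 i) * w (Fin.castAdd d2 i))
          + ∑ i : Fin d2, z (Fin.natAdd d1 i) * w (Fin.natAdd d1 i) :=
      Fin.sum_univ_add _
    simp [PiLp.inner_apply, RCLike.inner_apply, hsum, hπ₁, hπ₂]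
    exact Fin.sum_univ_add _
  have hnorm_split : ∀ z : EuclideanSpace ℝ (Fin (d1+d2)), ‖z‖^2 = ‖π₁ z‖^2 + ‖π₂ z‖^2 := by
    intro z
    rw [← real_inner_self_eq_norm_sq, ← real_inner_self_eq_norm_sq,
      ← real_inner_self_eq_norm_sq, hinner_split]
  -- linear versions of the projections
  set P1 : EuclideanSpace ℝ (Fin (d1+d2)) →ₗ[ℝ] EuclideanSpace ℝ (Fin d1) :=
    { toFun := π₁
      map_add' := by intro z w; ext i; simp [hπ₁]
      map_smul' := by intro c z; ext i; simp [hπ₁] } with hP1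
  set P2 : EuclideanSpace ℝ (Fin (d1+d2)) →ₗ[ℝ] EuclideanSpace ℝ (Fin d2) :=
    { toFun := π₂
      map_add' := by intro z w; ext i; simp [hπ₂]
      map_smul' := by intro c z; ext i; simp [hπ₂] } with hP2
  have hP1a : ∀ z, P1 z = π₁ z := fun z => rfl
  have hP2a : ∀ z, P2 z = π₂ z := fun z => rfl
  -- the comparison point u = (y1, y2)
  set u : EuclideanSpace ℝ (Fin (d1+d2)) :=
    WithLp.toLp 2 (fun j => Fin.addCases (motive := fun _ => ℝ) (fun i => y1 i) (fun i => y2 i) j) with hu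
  have hπ₁u : π₁ u = y1 := by
    ext i; rw [hπ₁, hu, PiLp.toLp_apply]; exact Fin.addCases_left i
  have hπ₂u : π₂ u = y2 := by
    ext i; rw [hπ₂, hu, PiLp.toLp_apply]; exact Fin.addCases_right i
  -- ===== scalar sequence facts =====
  have haA : ∀ t, (0 ≤ A t) ∧ (0 < a (t+1)) := by
    intro t
    induction t with
    | zero =>
      constructor
      · rw [hA0]
      · rw [ha 0, hA0]
        have : (0:ℝ) < 1 + γ * 0 := by norm_num
        exact div_pos this (by linarith)
    | succ t ih =>
      obtain ⟨h1, h2⟩ := ih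
      have hA1 : 0 ≤ A (t+1) := by rw [hA]; linarith
      refine ⟨hA1, ?_⟩
      rw [ha (t+1)]
      have : (0:ℝ) < 1 + γ * A (t+1) := by nlinarith [mul_nonneg hγ hA1]
      exact div_pos this (by linarith)
  have hAnn : ∀ t, 0 ≤ A t := fun t => (haA t).1
  have hap : ∀ t, 0 < a (t+1) := fun t => (haA t).2
  have hνp : ∀ t, 0 < 1 + γ * A t := fun t => by nlinarith [mul_nonneg hγ (hAnn t)]
  have hAmono : ∀ t, A t ≤ A (t+1) := fun t => by rw [hA]; linarith [hap t]
  have haL : ∀ t, a (t+1) * L = (1 + γ * A t)/2 := by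
    intro t; rw [ha]; field_simp
  have hAsum : ∀ t, A t = ∑ j ∈ Finset.Icc 1 t, a j := by
    intro t
    induction t with
    | zero => simp [hA0]
    | succ t ih =>
      rw [hA, ih, Finset.sum_Icc_succ_top (Nat.le_add_left 1 t)]
  have hApos : 0 < A k := by
    obtain ⟨k', rfl⟩ : ∃ k', k = k'+1 := ⟨k-1, (Nat.succ_pred_eq_of_pos hk).symm⟩
    rw [hA]; linarith [hAnn k', hap k']
  -- ===== the extrapolation error vectors and blockwise Lipschitz bound =====
  set e : ℕ → EuclideanSpace ℝ (Fin (d1+d2)) := fun t => F (x t) - p t with he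
  have he0 : e 0 = 0 := by rw [he]; simp [hp0]
  have hE : ∀ t, ‖e (t+1)‖^2 ≤ L^2 * ‖x (t+1) - x t‖^2 := by
    intro t
    have hsq : ‖e (t+1)‖^2 = ∑ j, (e (t+1) j)^2 := by
      rw [← real_inner_self_eq_norm_sq]
      simp only [PiLp.inner_apply, RCLike.inner_apply, conj_trivial, sq]
    have hib : ∀ i : Fin m,
        ∑ j ∈ Finset.univ.filter (fun j => blk j = i), (e (t+1) j)^2
          ≤ quadForm (Qhat i) (x (t+1) - x t) := by
      intro i
      set w : EuclideanSpace ℝ (Fin (d1+d2)) :=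
        WithLp.toLp 2 (fun j' => if blk j' < i then x (t+1) j' else x t j') with hw
      have h1 : ∑ j ∈ Finset.univ.filter (fun j => blk j = i), (e (t+1) j)^2
          = ∑ j ∈ Finset.univ.filter (fun j => blk j = i), (F (x (t+1)) j - F w j)^2 := by
        refine Finset.sum_congr rfl ?_
        intro j hj
        rw [Finset.mem_filter] at hj
        have hpj := hp t j
        have hej : e (t+1) j = F (x (t+1)) j - F w j := by
          rw [he]
          simp only [PiLp.sub_apply]
          rw [hpj, hw, hj.2]
        rw [hej]
      have h2 := hlip i (x (t+1)) w
      have h3 : quadForm (Q i) (x (t+1) - w) = quadForm (Qhat i) (x (t+1) - x t) := by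
        rw [quadForm_eq', quadForm_eq']
        refine Finset.sum_congr rfl fun j _ => Finset.sum_congr rfl fun l _ => ?_
        have hcj : ∀ j' : Fin (d1+d2), (x (t+1) - w) j'
            = if blk j' < i then 0 else (x (t+1) - x t) j' := by
          intro j'
          simp only [PiLp.sub_apply, hw, PiLp.toLp_apply]
          split <;> simp
        rw [hcj j, hcj l, hQhat i j l]
        by_cases hbj : blk j < i
        · simp [hbj, not_le.mpr hbj]
        · by_cases hbl : blk l < i
          · simp [hbj, hbl, not_le.mpr hbl]
          · simp [hbj, hbl, not_lt.mp hbj, not_lt.mp hbl]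
      rw [h1, ← h3]; exact h2
    calc ‖e (t+1)‖^2 = ∑ j, (e (t+1) j)^2 := hsq
      _ = ∑ i : Fin m, ∑ j ∈ Finset.univ.filter (fun j => blk j = i), (e (t+1) j)^2 :=
          (Finset.sum_fiberwise _ _ _).symm
      _ ≤ ∑ i : Fin m, quadForm (Qhat i) (x (t+1) - x t) :=
          Finset.sum_le_sum fun i _ => hib i
      _ = quadForm (∑ i, Qhat i) (x (t+1) - x t) := quadForm_sum' _ _
      _ ≤ matOpNorm (∑ i, Qhat i) * ‖x (t+1) - x t‖^2 := quadForm_le' _ _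
      _ = L^2 * ‖x (t+1) - x t‖^2 := by rw [← hL2]
  have heb : ∀ t, ‖e (t+1)‖ ≤ L * ‖x (t+1) - x t‖ := by
    intro t
    have h := hE t
    have h2 : L^2 * ‖x (t+1) - x t‖^2 = (L * ‖x (t+1) - x t‖)^2 := by ring
    rw [h2] at h
    exact (abs_le_of_sq_le_sq' h (by positivity)).2
  -- ===== convexity of the regularizer parts =====
  have hGconv : ConvexOn ℝ Set.univ
      (fun z : EuclideanSpace ℝ (Fin (d1+d2)) => G z - γ/2 * ‖z‖^2) := by
    have h1 := hg1.comp_linearMap P1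
    have h2 := hg2.comp_linearMap P2
    rw [Set.preimage_univ] at h1 h2
    have h3 := h1.add h2
    have hfe : (fun z : EuclideanSpace ℝ (Fin (d1+d2)) => G z - γ/2 * ‖z‖^2)
        = ((fun w => g1 w - γ/2 * ‖w‖^2) ∘ P1) + ((fun w => g2 w - γ/2 * ‖w‖^2) ∘ P2) := by
      funext z
      simp only [Pi.add_apply, Function.comp_apply, hP1a, hP2a]
      rw [hG z, hnorm_split z]; ring
    rw [hfe]; exact h3
  have hg1c : ConvexOn ℝ Set.univ g1 := by
    have h := hg1.add (coder_convexOn_normSq (by linarith : (0:ℝ) ≤ γ/2))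
    have hfe : ((fun w => g1 w - γ/2 * ‖w‖^2) + fun w : EuclideanSpace ℝ (Fin d1) => γ/2 * ‖w‖^2)
        = g1 := by funext w; simp
    rwa [hfe] at h
  have hg2c : ConvexOn ℝ Set.univ g2 := by
    have h := hg2.add (coder_convexOn_normSq (by linarith : (0:ℝ) ≤ γ/2))
    have hfe : ((fun w => g2 w - γ/2 * ‖w‖^2) + fun w : EuclideanSpace ℝ (Fin d2) => γ/2 * ‖w‖^2)
        = g2 := by funext w; simp
    rwa [hfe] at h
  -- ===== estimate sequence facts =====
  have hψuu : ∀ t, ψ t u u = 1/2 * ‖u - x 0‖^2 := by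
    intro t; rw [hψ]; simp
  have hψrec : ∀ t z, ψ (t+1) z u = ψ t z u + a (t+1) * (⟪q (t+1), z - u⟫ + G z - G u) := by
    intro t z
    rw [hψ, hψ, Finset.sum_Icc_succ_top (Nat.le_add_left 1 t)]; ring
  have hgrow : ∀ t z, ψ t (x t) u + (1 + γ * A t)/2 * ‖z - x t‖^2 ≤ ψ t z u := by
    intro t z
    have hmin : ∀ z', (fun z' => ψ t z' u) (x t) ≤ (fun z' => ψ t z' u) z' := by
      rcases Nat.eq_zero_or_pos t with rfl | ht
      · intro z'
        show ψ 0 (x 0) u ≤ ψ 0 z' u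
        rw [hψ, hψ]
        simp only [Finset.Icc_self, Finset.Icc_eq_empty_of_lt Nat.zero_lt_one, Finset.sum_empty, sub_self, norm_zero]
        norm_num
      · exact fun z' => hxmin t ht u z'
    have hceq : ∀ z' : EuclideanSpace ℝ (Fin (d1+d2)),
        ψ t z' u - (1 + γ * A t)/2 * ‖z'‖^2
        = ⟪(∑ j ∈ Finset.Icc 1 t, a j • q j) - x 0, z'⟫
          + A t * (G z' - γ/2 * ‖z'‖^2)
          + ((∑ j ∈ Finset.Icc 1 t, a j * (-⟪q j, u⟫ - G u)) + 1/2 * ‖x 0‖^2) := by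
      intro z'
      rw [hψ]
      have hx0 : ‖z' - x 0‖^2 = ‖z'‖^2 - 2*⟪x 0, z'⟫ + ‖x 0‖^2 := by
        rw [norm_sub_sq_real, real_inner_comm]
      have hsum : ∑ j ∈ Finset.Icc 1 t, a j * (⟪q j, z' - u⟫ + G z' - G u)
          = ⟪∑ j ∈ Finset.Icc 1 t, a j • q j, z'⟫ + (∑ j ∈ Finset.Icc 1 t, a j) * G z'
            + ∑ j ∈ Finset.Icc 1 t, a j * (-⟪q j, u⟫ - G u) := by
        simp only [sum_inner, real_inner_smul_left, Finset.sum_mul, ← Finset.sum_add_distrib]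
        refine Finset.sum_congr rfl fun j _ => ?_
        rw [inner_sub_right]; ring
      rw [hsum, hx0, ← hAsum t, inner_sub_left]
      ring
    have hcconv : ConvexOn ℝ Set.univ
        (fun z' : EuclideanSpace ℝ (Fin (d1+d2)) => ψ t z' u - (1 + γ * A t)/2 * ‖z'‖^2) := by
      have hfeq : (fun z' : EuclideanSpace ℝ (Fin (d1+d2)) =>
          ψ t z' u - (1 + γ * A t)/2 * ‖z'‖^2)
          = fun z' => (⟪(∑ j ∈ Finset.Icc 1 t, a j • q j) - x 0, z'⟫
            + A t • (G z' - γ/2 * ‖z'‖^2))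
            + ((∑ j ∈ Finset.Icc 1 t, a j * (-⟪q j, u⟫ - G u)) + 1/2 * ‖x 0‖^2) := by
        funext z'; rw [hceq z']; simp [smul_eq_mul]
      rw [hfeq]
      exact ((coder_convexOn_inner _).add (hGconv.smul (hAnn t))).add_const _
    have := coder_quad_growth hcconv (le_of_lt (hνp t)) (fun z' => ψ t z' u)
      (fun z' => by ring) hmin z
    simpa using this
  -- ===== lower bound on the estimate sequence value =====
  have hB : ∀ t, ∑ j ∈ Finset.Icc 1 t, (a j * (⟪q j, x j - u⟫ + G (x j) - G u)
      + (1 + γ * A (j-1))/2 * ‖x j - x (j-1)‖^2) ≤ ψ t (x t) u := by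
    intro t
    induction t with
    | zero => simp [hψ]
    | succ t ih =>
      rw [Finset.sum_Icc_succ_top (Nat.le_add_left 1 t)]
      have h1 := hgrow t (x (t+1))
      have h2 := hψrec t (x (t+1))
      simp only [Nat.add_sub_cancel]
      linarith
  have hMain1 : ∀ t, ∑ j ∈ Finset.Icc 1 t, (a j * (⟪q j, x j - u⟫ + G (x j) - G u)
      + (1 + γ * A (j-1))/2 * ‖x j - x (j-1)‖^2) + (1 + γ * A t)/2 * ‖u - x t‖^2
      ≤ 1/2 * ‖u - x 0‖^2 := by
    intro t
    have h1 := hB t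
    have h2 := hgrow t u
    rw [hψuu t] at h2
    linarith
  -- ===== decomposition of the extrapolated gradient terms =====
  have hqdec : ∀ t, a (t+1) * ⟪q (t+1), x (t+1) - u⟫
      = a (t+1) * ⟪F (x (t+1)), x (t+1) - u⟫ - a (t+1) * ⟪e (t+1), x (t+1) - u⟫
        + a t * ⟪e t, x (t+1) - u⟫ := by
    intro t
    have hqv : q (t+1) = F (x (t+1)) - e (t+1) + (a t / a (t+1)) • e t := by
      ext j
      simp only [PiLp.add_apply, PiLp.sub_apply, PiLp.smul_apply, smul_eq_mul, he]
      rw [hq t j]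
      ring
    have hcanc : a (t+1) * (a t / a (t+1)) = a t := by
      rw [mul_comm]
      exact div_mul_cancel₀ _ (hap t).ne'
    rw [hqv, inner_add_left, inner_sub_left, real_inner_smul_left]
    linear_combination (⟪e t, x (t+1) - u⟫ : ℝ) * hcanc
  have hT : ∀ t, ∑ j ∈ Finset.Icc 1 t, (a (j-1) * ⟪e (j-1), x j - u⟫ - a j * ⟪e j, x j - u⟫)
      = (∑ j ∈ Finset.Icc 1 t, a (j-1) * ⟪e (j-1), x j - x (j-1)⟫) - a t * ⟪e t, x t - u⟫ := by
    intro t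
    induction t with
    | zero => simp [ha0]
    | succ t ih =>
      rw [Finset.sum_Icc_succ_top (Nat.le_add_left 1 t), Finset.sum_Icc_succ_top (Nat.le_add_left 1 t), ih]
      simp only [Nat.add_sub_cancel]
      have hsp : ⟪e t, x (t+1) - u⟫ = ⟪e t, x (t+1) - x t⟫ + ⟪e t, x t - u⟫ := by
        rw [← inner_add_right]
        congr 1
        abel
      rw [hsp]; ring
  -- ===== bounding the error terms =====
  have hEbnd : ∀ t, 1 ≤ t →
      ∑ j ∈ Finset.Icc 1 t, (-(a (j-1) * ⟪e (j-1), x j - x (j-1)⟫)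
        - (1 + γ * A (j-1))/2 * ‖x j - x (j-1)‖^2)
      ≤ -((1 + γ * A (t-1))/4 * ‖x t - x (t-1)‖^2) := by
    intro t ht
    induction t, ht using Nat.le_induction with
    | base =>
      simp only [Finset.Icc_self, Finset.sum_singleton, Nat.sub_self, ha0]
      have h0 := hνp 0
      nlinarith [sq_nonneg ‖x 1 - x 0‖, norm_nonneg (x 1 - x 0)]
    | succ t ht ih =>
      obtain ⟨s, rfl⟩ : ∃ s, t = s + 1 := ⟨t-1, (Nat.succ_pred_eq_of_pos ht).symm⟩
      rw [Finset.sum_Icc_succ_top (by omega : 1 ≤ s+1+1)]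
      simp only [Nat.add_sub_cancel] at ih ⊢
      -- bound the new cross term
      have hcs : -(a (s+1) * ⟪e (s+1), x (s+2) - x (s+1)⟫)
          ≤ (1 + γ * A s)/2 * (‖x (s+1) - x s‖ * ‖x (s+2) - x (s+1)‖) := by
        have h1 : -⟪e (s+1), x (s+2) - x (s+1)⟫ ≤ ‖e (s+1)‖ * ‖x (s+2) - x (s+1)‖ := by
          have h2 := real_inner_le_norm (-(e (s+1))) (x (s+2) - x (s+1))
          rw [inner_neg_left, norm_neg] at h2
          linarith
        have h3 : ‖e (s+1)‖ * ‖x (s+2) - x (s+1)‖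
            ≤ (L * ‖x (s+1) - x s‖) * ‖x (s+2) - x (s+1)‖ :=
          mul_le_mul_of_nonneg_right (heb s) (norm_nonneg _)
        have h4 := hap s
        have h5 := haL s
        have h6 : a (s+1) * (-⟪e (s+1), x (s+2) - x (s+1)⟫)
            ≤ a (s+1) * ((L * ‖x (s+1) - x s‖) * ‖x (s+2) - x (s+1)‖) :=
          mul_le_mul_of_nonneg_left (h1.trans h3) h4.le
        calc -(a (s+1) * ⟪e (s+1), x (s+2) - x (s+1)⟫)
            = a (s+1) * (-⟪e (s+1), x (s+2) - x (s+1)⟫) := by ring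
          _ ≤ a (s+1) * ((L * ‖x (s+1) - x s‖) * ‖x (s+2) - x (s+1)‖) := h6
          _ = (a (s+1) * L) * (‖x (s+1) - x s‖ * ‖x (s+2) - x (s+1)‖) := by ring
          _ = (1 + γ * A s)/2 * (‖x (s+1) - x s‖ * ‖x (s+2) - x (s+1)‖) := by rw [h5]
      have hmono : 1 + γ * A s ≤ 1 + γ * A (s+1) := by nlinarith [mul_nonneg hγ (hAnn s), hAmono s, hγ]
      have hν1 := hνp s
      nlinarith [ih, hcs, sq_nonneg (‖x (s+1) - x s‖ - ‖x (s+2) - x (s+1)‖),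
        sq_nonneg ‖x (s+2) - x (s+1)‖]
  -- ===== the per-step gap sum bound =====
  have hGapSum : ∑ j ∈ Finset.Icc 1 k, a j * (⟪F (x j), x j - u⟫ + G (x j) - G u)
      ≤ 1/2 * ‖u - x 0‖^2 := by
    obtain ⟨s, rfl⟩ : ∃ s, k = s + 1 := ⟨k-1, (Nat.succ_pred_eq_of_pos hk).symm⟩
    have hsplit : ∀ j ∈ Finset.Icc 1 (s+1),
        a j * (⟪q j, x j - u⟫ + G (x j) - G u)
        = a j * (⟪F (x j), x j - u⟫ + G (x j) - G u)
          + (a (j-1) * ⟪e (j-1), x j - u⟫ - a j * ⟪e j, x j - u⟫) := by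
      intro j hj
      rw [Finset.mem_Icc] at hj
      obtain ⟨r, rfl⟩ : ∃ r, j = r + 1 := ⟨j-1, (Nat.succ_pred_eq_of_pos hj.1).symm⟩
      simp only [Nat.add_sub_cancel]
      have h := hqdec r
      linear_combination h
    have hsum1 : ∑ j ∈ Finset.Icc 1 (s+1), (a j * (⟪q j, x j - u⟫ + G (x j) - G u)
          + (1 + γ * A (j-1))/2 * ‖x j - x (j-1)‖^2)
        = ∑ j ∈ Finset.Icc 1 (s+1), a j * (⟪F (x j), x j - u⟫ + G (x j) - G u)
          + (∑ j ∈ Finset.Icc 1 (s+1), (a (j-1) * ⟪e (j-1), x j - u⟫ - a j * ⟪e j, x j - u⟫))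
          + ∑ j ∈ Finset.Icc 1 (s+1), (1 + γ * A (j-1))/2 * ‖x j - x (j-1)‖^2 := by
      rw [← Finset.sum_add_distrib, ← Finset.sum_add_distrib]
      refine Finset.sum_congr rfl fun j hj => ?_
      rw [hsplit j hj]
    have hmain := hMain1 (s+1)
    rw [hsum1, hT (s+1)] at hmain
    -- last-term AM-GM
    have hlast : a (s+1) * ⟪e (s+1), x (s+1) - u⟫
        ≤ (1 + γ * A s)/4 * ‖x (s+1) - x s‖^2 + (1 + γ * A (s+1))/2 * ‖u - x (s+1)‖^2 := by
      have h1 : ⟪e (s+1), x (s+1) - u⟫ ≤ ‖e (s+1)‖ * ‖x (s+1) - u‖ := real_inner_le_norm _ _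
      have h2 : ‖e (s+1)‖ * ‖x (s+1) - u‖ ≤ (L * ‖x (s+1) - x s‖) * ‖x (s+1) - u‖ :=
        mul_le_mul_of_nonneg_right (heb s) (norm_nonneg _)
      have h4 := hap s
      have h5 := haL s
      have hXY : a (s+1) * ⟪e (s+1), x (s+1) - u⟫
          ≤ ((1 + γ * A s)/2 * ‖x (s+1) - x s‖) * ‖x (s+1) - u‖ := by
        calc a (s+1) * ⟪e (s+1), x (s+1) - u⟫
            ≤ a (s+1) * ((L * ‖x (s+1) - x s‖) * ‖x (s+1) - u‖) :=
              mul_le_mul_of_nonneg_left (h1.trans h2) h4.le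
          _ = (a (s+1) * L) * (‖x (s+1) - x s‖ * ‖x (s+1) - u‖) := by ring
          _ = ((1 + γ * A s)/2 * ‖x (s+1) - x s‖) * ‖x (s+1) - u‖ := by rw [h5]; ring
      have hamgm : ∀ (X Y μ : ℝ), 0 < μ → X*Y ≤ X^2/(2*μ) + μ*Y^2/2 := by
        intro X Y μ hμ
        rw [div_add' _ _ _ (by positivity), le_div_iff₀ (by positivity)]
        nlinarith [sq_nonneg (X - μ*Y)]
      have h6 := hamgm ((1 + γ * A s)/2 * ‖x (s+1) - x s‖) ‖x (s+1) - u‖ (1 + γ * A (s+1)) (hνp (s+1))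
      have hmono : 1 + γ * A s ≤ 1 + γ * A (s+1) := by nlinarith [hAmono s, hγ]
      have hνs := hνp s
      have hνs1 := hνp (s+1)
      have hq2 : ((1 + γ * A s)/2 * ‖x (s+1) - x s‖)^2 / (2*(1 + γ * A (s+1)))
          ≤ (1 + γ * A s)/4 * ‖x (s+1) - x s‖^2 := by
        rw [div_le_iff₀ (by positivity)]
        nlinarith [sq_nonneg ‖x (s+1) - x s‖, mul_nonneg hνs.le (sq_nonneg ‖x (s+1) - x s‖)]
      have hnorm_rev : ‖x (s+1) - u‖ = ‖u - x (s+1)‖ := norm_sub_rev _ _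
      rw [hnorm_rev] at h6 hXY
      linarith [hXY.trans h6]
    have herr := hEbnd (s+1) (by omega)
    simp only [Nat.add_sub_cancel] at herr hmain
    -- herr : ∑ (−cross − νhalf‖Δ‖²) ≤ −ν s/4 ‖Δ_{s+1}‖²
    have hsum_split : ∑ j ∈ Finset.Icc 1 (s+1), (-(a (j-1) * ⟪e (j-1), x j - x (j-1)⟫)
          - (1 + γ * A (j-1))/2 * ‖x j - x (j-1)‖^2)
        = -((∑ j ∈ Finset.Icc 1 (s+1), a (j-1) * ⟪e (j-1), x j - x (j-1)⟫)
            + ∑ j ∈ Finset.Icc 1 (s+1), (1 + γ * A (j-1))/2 * ‖x j - x (j-1)‖^2) := by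
      rw [neg_add, ← Finset.sum_neg_distrib, ← Finset.sum_neg_distrib, ← Finset.sum_add_distrib]
      exact Finset.sum_congr rfl fun j _ => by ring
    rw [hsum_split] at herr
    linarith [hmain, herr, hlast]
  -- ===== from the operator gap to the min-max gap =====
  have hgapF : ∀ z : EuclideanSpace ℝ (Fin (d1+d2)),
      Phi (π₁ z) y2 - Phi y1 (π₂ z) ≤ ⟪F z, z - u⟫ + G z - G u := by
    intro z
    have hπ₁F : π₁ (F z) = gradient (fun w1 => φ w1 (π₂ z)) (π₁ z) := by
      ext i; rw [hπ₁]; exact hF1 z i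
    have hπ₂F : π₂ (F z) = -gradient (fun w2 => φ (π₁ z) w2) (π₂ z) := by
      ext i; rw [hπ₂, hF2 z i]; simp
    have hin : ⟪F z, z - u⟫ = ⟪gradient (fun w1 => φ w1 (π₂ z)) (π₁ z), π₁ z - y1⟫
        + ⟪-gradient (fun w2 => φ (π₁ z) w2) (π₂ z), π₂ z - y2⟫ := by
      rw [hinner_split (F z) (z - u), hsub₁ z u, hsub₂ z u, hπ₁u, hπ₂u, hπ₁F, hπ₂F]
    have h1 := coder_convex_grad_ineq (hφconv (π₂ z)) (hφd1 (π₂ z)) (π₁ z) y1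
    have hgneg : gradient (fun w2 => -φ (π₁ z) w2) (π₂ z)
        = -gradient (fun w2 => φ (π₁ z) w2) (π₂ z) :=
      coder_gradient_neg ((hφd2 (π₁ z)) (π₂ z))
    have h2 := coder_convex_grad_ineq (f := fun w2 => -φ (π₁ z) w2)
      (hφconc (π₁ z)).neg ((hφd2 (π₁ z)).neg) (π₂ z) y2
    rw [hgneg] at h2
    have e1 : ⟪gradient (fun w1 => φ w1 (π₂ z)) (π₁ z), y1 - π₁ z⟫
        = -⟪gradient (fun w1 => φ w1 (π₂ z)) (π₁ z), π₁ z - y1⟫ := by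
      rw [← inner_neg_right, neg_sub]
    have e2 : ⟪-gradient (fun w2 => φ (π₁ z) w2) (π₂ z), y2 - π₂ z⟫
        = -⟪-gradient (fun w2 => φ (π₁ z) w2) (π₂ z), π₂ z - y2⟫ := by
      rw [← inner_neg_right, neg_sub]
    rw [e1] at h1
    rw [e2] at h2
    rw [hin, hPhi, hPhi, hG z, hG u, hπ₁u, hπ₂u]
    linarith
  -- ===== convexity of the gap function and Jensen =====
  have hfconv : ConvexOn ℝ Set.univ
      (fun z : EuclideanSpace ℝ (Fin (d1+d2)) => Phi (π₁ z) y2 - Phi y1 (π₂ z)) := by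
    have hφ1 := (hφconv y2).comp_linearMap P1
    have hφ2 := ((hφconc y1).neg).comp_linearMap P2
    have hg1P := hg1c.comp_linearMap P1
    have hg2P := hg2c.comp_linearMap P2
    rw [Set.preimage_univ] at hφ1 hφ2 hg1P hg2P
    have h := (((hφ1.add hg1P).add (hφ2.add hg2P)).add_const (-g2 y2 - g1 y1))
    have hfeq : (fun z : EuclideanSpace ℝ (Fin (d1+d2)) => Phi (π₁ z) y2 - Phi y1 (π₂ z))
        = fun z => ((((fun w1 => φ w1 y2) ∘ P1) + (g1 ∘ P1))
            + (((-fun w2 => φ y1 w2) ∘ P2) + (g2 ∘ P2))) z + (-g2 y2 - g1 y1) := by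
      funext z
      simp only [Pi.add_apply, Function.comp_apply, Pi.neg_apply, hP1a, hP2a]
      rw [hPhi, hPhi]; ring
    rw [hfeq]
    exact h
  have hwnn : ∀ j ∈ Finset.Icc 1 k, 0 ≤ a j := by
    intro j hj
    rw [Finset.mem_Icc] at hj
    obtain ⟨r, rfl⟩ : ∃ r, j = r + 1 := ⟨j-1, (Nat.succ_pred_eq_of_pos hj.1).symm⟩
    exact (hap r).le
  have hjensen : Phi (π₁ (xt k)) y2 - Phi y1 (π₂ (xt k))
      ≤ (A k)⁻¹ * ∑ j ∈ Finset.Icc 1 k, a j * (Phi (π₁ (x j)) y2 - Phi y1 (π₂ (x j))) := by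
    have hcm : xt k = (Finset.Icc 1 k).centerMass a x := by
      rw [hxt k, Finset.centerMass, ← hAsum k]
    have hwpos : 0 < ∑ j ∈ Finset.Icc 1 k, a j := by rw [← hAsum k]; exact hApos
    have h := hfconv.map_centerMass_le hwnn hwpos (fun j _ => Set.mem_univ (x j))
    rw [← hcm] at h
    refine h.trans ?_
    rw [Finset.centerMass, ← hAsum k]
    simp only [smul_eq_mul, Finset.smul_sum]
    exact le_of_eq (by simp [Function.comp, Finset.mul_sum])
  have hsum2 : ∑ j ∈ Finset.Icc 1 k, a j * (Phi (π₁ (x j)) y2 - Phi y1 (π₂ (x j)))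
      ≤ ∑ j ∈ Finset.Icc 1 k, a j * (⟪F (x j), x j - u⟫ + G (x j) - G u) :=
    Finset.sum_le_sum fun j hj => mul_le_mul_of_nonneg_left (hgapF (x j)) (hwnn j hj)
  -- ===== conclusion =====
  have hnormu : ‖u - x 0‖^2 = ‖y1 - π₁ (x 0)‖^2 + ‖y2 - π₂ (x 0)‖^2 := by
    rw [hnorm_split (u - x 0), hsub₁ u (x 0), hsub₂ u (x 0), hπ₁u, hπ₂u]
  have hfinal : Phi (π₁ (xt k)) y2 - Phi y1 (π₂ (xt k))
      ≤ (A k)⁻¹ * (1/2 * ‖u - x 0‖^2) := by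
    refine hjensen.trans ?_
    exact mul_le_mul_of_nonneg_left (hsum2.trans hGapSum) (inv_nonneg.mpr hApos.le)
  rw [hnormu] at hfinal
  refine hfinal.trans (le_of_eq ?_)
  have h2A : (0:ℝ) < 2 * A k := by linarith
  rw [eq_div_iff h2A.ne']
  field_simp
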